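/- Let ξ be a primitive n-th root of unity and Q ∈ ℂ(x) a rational function with Q(x) + Q(ξx) + ⋯ + Q(ξ^{n−1}x) = 1. Then conjugating the birational map g(x,y) = (ξx, y + Q(x)) of ℂ² by h(x,y) = (x, y − (1/n)·Σ_{i=1}^{n−1} i·Q(ξⁱx)) yields h ∘ g ∘ h⁻¹ = (ξx, y + 1/n). -/
import Mathlib


open Finset

/-- let `ξ` be a primitive `n`-th root of unity and `Q ∈ ℂ(x)` with
`Q(x) + Q(ξx) + ⋯ + Q(ξ^{n−1}x) = 1`. Conjugating `g(x,y) = (ξx, y + Q(x))` by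
`h(x,y) = (x, y − (1/n)·Σ_{i=1}^{n−1} i·Q(ξⁱx))` yields `h∘g∘h⁻¹ = (ξx, y + 1/n)`. -/
theorem stmt17 (n : ℕ) (hn : 0 < n) (ξ : ℂ) (hξ : IsPrimitiveRoot ξ n)
    (Q : ℂ → ℂ)
    (hrat : ∃ p q : Polynomial ℂ, q ≠ 0 ∧
      ∀ x : ℂ, Polynomial.eval x q ≠ 0 → Q x = Polynomial.eval x p / Polynomial.eval x q)
    (hsum : ∀ x : ℂ, ∑ i ∈ Finset.range n, Q (ξ ^ i * x) = 1) :
    ∀ x y : ℂ,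
      (fun p : ℂ × ℂ =>
          (p.1, p.2 - (1 / (n : ℂ)) * ∑ i ∈ Finset.Ico 1 n, (i : ℂ) * Q (ξ ^ i * p.1)))
        ((fun p : ℂ × ℂ => (ξ * p.1, p.2 + Q p.1))
          ((fun p : ℂ × ℂ =>
              (p.1, p.2 + (1 / (n : ℂ)) * ∑ i ∈ Finset.Ico 1 n, (i : ℂ) * Q (ξ ^ i * p.1)))
            (x, y)))
        = (ξ * x, y + 1 / (n : ℂ)) := by
  intro x y
  simp only [Prod.mk.injEq]
  refine ⟨trivial, ?_⟩
  have hn0 : (n : ℂ) ≠ 0 := Nat.cast_ne_zero.mpr hn.ne'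
  -- convert Ico sums to range sums
  have hIco : ∀ z : ℂ, ∑ i ∈ Finset.Ico 1 n, (i : ℂ) * Q (ξ ^ i * z)
      = ∑ i ∈ Finset.range n, (i : ℂ) * Q (ξ ^ i * z) := by
    intro z
    rw [Finset.range_eq_Ico, Finset.sum_eq_sum_Ico_succ_bot hn]
    simp
  have hshift : ∀ i : ℕ, ξ ^ i * (ξ * x) = ξ ^ (i + 1) * x := by
    intro i; ring
  have key : ∑ i ∈ Finset.range n, (i : ℂ) * Q (ξ ^ (i + 1) * x)
      = (∑ i ∈ Finset.range n, (i : ℂ) * Q (ξ ^ i * x)) + (n : ℂ) * Q x - 1 := by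
    have h1 : ∑ i ∈ Finset.range n, (i : ℂ) * Q (ξ ^ (i + 1) * x)
        = ∑ i ∈ Finset.range n, (((i : ℂ) + 1) * Q (ξ ^ (i + 1) * x)
            - Q (ξ ^ (i + 1) * x)) := by
      apply Finset.sum_congr rfl; intro i _; ring
    rw [h1, Finset.sum_sub_distrib]
    have h2 : ∑ i ∈ Finset.range n, ((i : ℂ) + 1) * Q (ξ ^ (i + 1) * x)
        = (∑ i ∈ Finset.range (n + 1), (i : ℂ) * Q (ξ ^ i * x)) - 0 * Q (ξ ^ 0 * x) := by
      rw [Finset.sum_range_succ' (fun i => (i : ℂ) * Q (ξ ^ i * x)) n]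
      push_cast; ring
    have h3 : ∑ i ∈ Finset.range n, Q (ξ ^ (i + 1) * x)
        = (∑ i ∈ Finset.range (n + 1), Q (ξ ^ i * x)) - Q (ξ ^ 0 * x) := by
      rw [Finset.sum_range_succ' (fun i => Q (ξ ^ i * x)) n]; ring
    rw [h2, h3, Finset.sum_range_succ, Finset.sum_range_succ, hsum x, hξ.pow_eq_one]
    simp only [pow_zero, one_mul]
    ring
  have hsx : ∑ i ∈ Finset.Ico 1 n, (i : ℂ) * Q (ξ ^ i * (ξ * x))
      = (∑ i ∈ Finset.range n, (i : ℂ) * Q (ξ ^ i * x)) + (n : ℂ) * Q x - 1 := by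
    rw [hIco (ξ * x), ← key]
    exact Finset.sum_congr rfl fun i _ => by rw [hshift i]
  rw [hsx, hIco x]
  field_simp
  ring
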